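/- Let A be a Banach algebra, and suppose h_n : S → A is a sequence of maps on a set S converging uniformly to h : S → A with each h_n(S) and h(S) bounded. If the spectral radius ρ(h(S)) < 1 (where ρ(T) = inf { r > 0 : ⋃_{k≥1}(r⁻¹T)^k is bounded }), then ρ(h_n(S)) < 1 for all sufficiently large n. -/
import Mathlib


open Pointwise

/-- The spectral radius of a subset `T` of a normed algebra:
`ρ(T) = inf { r > 0 : ⋃_{k ≥ 1} (r⁻¹ T)^k is bounded }` (equal to `∞` if no such `r`). -/
noncomputable def specRad {A : Type*} [NormedRing A] [NormedAlgebra ℝ A] (T : Set A) : ENNReal :=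
  sInf {ρ : ENNReal | ∃ r : ℝ, 0 < r ∧ ρ = ENNReal.ofReal r ∧
    Bornology.IsBounded (⋃ k : ℕ, (r⁻¹ • T) ^ (k + 1))}

private lemma listProd_mem_pow {A : Type*} [Monoid A] (X : Set A) :
    ∀ l : List A, (∀ x ∈ l, x ∈ X) → l.prod ∈ X ^ l.length := by
  intro l
  induction l with
  | nil => intro _; simp [Set.mem_one]
  | cons a t ih =>
      intro hl
      rw [List.prod_cons, List.length_cons, pow_succ']
      exact Set.mul_mem_mul (hl a (by simp)) (ih fun x hx => hl x (by simp [hx]))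

private lemma smul_listProd {A : Type*} [Ring A] [Algebra ℝ A] (c : ℝ) :
    ∀ l : List A, (l.map (c • ·)).prod = c ^ l.length • l.prod := by
  intro l
  induction l with
  | nil => simp
  | cons a t ih =>
      simp only [List.map_cons, List.prod_cons, List.length_cons, ih, pow_succ]
      rw [smul_mul_smul_comm]
      ring_nf

/-- Key estimate: if all products of elements of `T` are bounded by `M r^len`, then
products of elements `ε`-close to `T`, (with a prefix of elements of `T`) are bounded
by `M r^(prefix len) (r + Mε)^len`. -/
private lemma key {A : Type*} [NormedRing A] [NormedAlgebra ℝ A] (T : Set A) (M r ε : ℝ)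
    (hM : 0 ≤ M) (hr : 0 ≤ r) (hε : 0 ≤ ε)
    (H : ∀ l : List A, (∀ x ∈ l, x ∈ T) → ‖l.prod‖ ≤ M * r ^ l.length) :
    ∀ (l p : List A), (∀ x ∈ p, x ∈ T) → (∀ x ∈ l, ∃ b ∈ T, ‖x - b‖ ≤ ε) →
      ‖(p ++ l).prod‖ ≤ M * r ^ p.length * (r + M * ε) ^ l.length := by
  intro l
  induction l with
  | nil => intro p hp _; simpa using H p hp
  | cons a t ih =>
      intro p hp hl
      obtain ⟨b, hb, hab⟩ := hl a (by simp)
      have hs : 0 ≤ r + M * ε := by positivity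
      have hsplit : (p ++ a :: t).prod
          = ((p ++ [b]) ++ t).prod + p.prod * ((a - b) * t.prod) := by
        simp only [List.prod_append, List.prod_cons, List.prod_nil, mul_one]
        have : a = (a - b) + b := by abel
        calc p.prod * (a * t.prod) = p.prod * (((a - b) + b) * t.prod) := by rw [← this]
          _ = p.prod * b * t.prod + p.prod * ((a - b) * t.prod) := by
              rw [add_mul, mul_add, add_comm, mul_assoc]
      have h1 : ‖((p ++ [b]) ++ t).prod‖
          ≤ M * r ^ (p.length + 1) * (r + M * ε) ^ t.length := by
        have := ih (p ++ [b])
          (by intro x hx; rcases List.mem_append.mp hx with h' | h'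
              · exact hp x h'
              · simp at h'; subst h'; exact hb)
          (fun x hx => hl x (by simp [hx]))
        simpa using this
      have h3 : ‖t.prod‖ ≤ M * (r + M * ε) ^ t.length := by
        have := ih [] (by simp) (fun x hx => hl x (by simp [hx]))
        simpa using this
      have h2 : ‖p.prod * ((a - b) * t.prod)‖
          ≤ (M * r ^ p.length) * (ε * (M * (r + M * ε) ^ t.length)) := by
        calc ‖p.prod * ((a - b) * t.prod)‖ ≤ ‖p.prod‖ * (‖a - b‖ * ‖t.prod‖) :=
              le_trans (norm_mul_le _ _)
                (by gcongr; exact norm_mul_le _ _)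
          _ ≤ (M * r ^ p.length) * (ε * (M * (r + M * ε) ^ t.length)) :=
              mul_le_mul (H p hp) (mul_le_mul hab h3 (norm_nonneg _) hε)
                (by positivity) (by positivity)
      calc ‖(p ++ a :: t).prod‖
          ≤ ‖((p ++ [b]) ++ t).prod‖ + ‖p.prod * ((a - b) * t.prod)‖ := by
            rw [hsplit]; exact norm_add_le _ _
        _ ≤ M * r ^ (p.length + 1) * (r + M * ε) ^ t.length
            + (M * r ^ p.length) * (ε * (M * (r + M * ε) ^ t.length)) := by
            exact add_le_add h1 h2
        _ = M * r ^ p.length * (r + M * ε) ^ (a :: t).length := by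
            simp only [List.length_cons]; ring

/-- If maps `h n : S → A` into a Banach algebra converge uniformly to `h`,
all with bounded image, and the spectral radius of `h(S)` is `< 1`, then the spectral radius
of `h n (S)` is `< 1` for all sufficiently large `n`. -/
theorem stmt13 {A : Type*} [NormedRing A] [NormedAlgebra ℝ A] [CompleteSpace A]
    {S : Type*} (h : ℕ → S → A) (h₀ : S → A)
    (hunif : TendstoUniformly h h₀ Filter.atTop)
    (hbdd : ∀ n, Bornology.IsBounded (Set.range (h n)))
    (hbdd₀ : Bornology.IsBounded (Set.range h₀))
    (hρ : specRad (Set.range h₀) < 1) :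
    ∀ᶠ n in Filter.atTop, specRad (Set.range (h n)) < 1 := by
  obtain ⟨ρ, hρmem, hρ1⟩ := sInf_lt_iff.mp hρ
  obtain ⟨r, hr0, rfl, hUb⟩ := hρmem
  have hr1 : r < 1 := ENNReal.ofReal_lt_one.mp hρ1
  obtain ⟨C, hC⟩ := isBounded_iff_forall_norm_le.mp hUb
  set T₀ : Set A := Set.range h₀ with hT₀
  set M : ℝ := max (max C ‖(1 : A)‖) 1 with hM
  have hM1 : (1 : ℝ) ≤ M := le_max_right _ _
  have hM0 : (0 : ℝ) < M := lt_of_lt_of_le one_pos hM1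
  -- products of elements of T₀ are bounded by M * r ^ len
  have H : ∀ l : List A, (∀ x ∈ l, x ∈ T₀) → ‖l.prod‖ ≤ M * r ^ l.length := by
    intro l hl
    cases l with
    | nil =>
        simp only [List.prod_nil, List.length_nil, pow_zero, mul_one]
        exact le_trans (le_max_right C ‖(1 : A)‖) (le_max_left _ 1)
    | cons a t =>
        have hmem : ((a :: t).map (r⁻¹ • ·)).prod ∈ ⋃ k : ℕ, (r⁻¹ • T₀) ^ (k + 1) := by
          apply Set.mem_iUnion.mpr ⟨t.length, ?_⟩
          have := listProd_mem_pow (r⁻¹ • T₀) ((a :: t).map (r⁻¹ • ·))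
            (by intro x hx
                obtain ⟨y, hy, rfl⟩ := List.mem_map.mp hx
                exact Set.smul_mem_smul_set (hl y hy))
          simpa using this
        have hCn := hC _ hmem
        have hsm := smul_listProd (A := A) r⁻¹ (a :: t)
        have hnorm : ‖((a :: t).map (r⁻¹ • ·)).prod‖ = (r⁻¹) ^ (a :: t).length * ‖(a :: t).prod‖ := by
          rw [hsm, norm_smul]
          simp [abs_of_pos (inv_pos.mpr hr0), abs_of_pos hr0]
        have hrpow : (0:ℝ) < r ^ (a :: t).length := pow_pos hr0 _
        have : (r⁻¹) ^ (a :: t).length * ‖(a :: t).prod‖ ≤ C := hnorm ▸ hCn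
        have hCM : C ≤ M := le_trans (le_max_left _ _) (le_max_left _ _)
        calc ‖(a :: t).prod‖ = r ^ (a :: t).length * ((r⁻¹) ^ (a :: t).length * ‖(a :: t).prod‖) := by
              rw [← mul_assoc, ← mul_pow, mul_inv_cancel₀ (ne_of_gt hr0)]; simp
          _ ≤ r ^ (a :: t).length * C := by gcongr
          _ ≤ M * r ^ (a :: t).length := by rw [mul_comm]; gcongr
  set ε : ℝ := (1 - r) / (2 * M) with hε
  have hε0 : 0 < ε := by apply div_pos (by linarith) (by linarith)
  set s : ℝ := r + M * ε with hs
  have hsval : s = (1 + r) / 2 := by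
    rw [hs, hε]; field_simp; ring
  have hs0 : 0 < s := by rw [hsval]; linarith
  have hs1 : s < 1 := by rw [hsval]; linarith
  have hev := Metric.tendstoUniformly_iff.mp hunif ε hε0
  filter_upwards [hev] with n hn
  set Tn : Set A := Set.range (h n) with hTn
  -- every element of Tn is ε-close to T₀
  have hclose : ∀ x ∈ Tn, ∃ b ∈ T₀, ‖x - b‖ ≤ ε := by
    rintro x ⟨y, rfl⟩
    refine ⟨h₀ y, Set.mem_range_self y, ?_⟩
    have := hn y
    rw [dist_eq_norm] at this
    rw [← norm_neg]
    simpa [neg_sub] using this.le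
  -- the union for Tn at radius s is bounded by M
  have hbound : Bornology.IsBounded (⋃ k : ℕ, (s⁻¹ • Tn) ^ (k + 1)) := by
    apply isBounded_iff_forall_norm_le.mpr ⟨M, ?_⟩
    intro x hx
    obtain ⟨k, hk⟩ := Set.mem_iUnion.mp hx
    obtain ⟨f, hf⟩ := Set.mem_pow.mp hk
    set l₀ : List A := List.ofFn (fun i => s • ((f i : A))) with hl₀
    have hmap : l₀.map (s⁻¹ • ·) = List.ofFn (fun i => ((f i : A))) := by
      rw [hl₀, List.map_ofFn]
      refine congrArg _ (funext fun i => ?_)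
      simp [Function.comp, inv_smul_smul₀ (ne_of_gt hs0)]
    have hxval : x = (s⁻¹) ^ (k + 1) • l₀.prod := by
      rw [← hf, ← hmap, smul_listProd]
      simp [hl₀]
    have hl₀close : ∀ z ∈ l₀, ∃ b ∈ T₀, ‖z - b‖ ≤ ε := by
      intro z hz
      rw [hl₀, List.mem_ofFn] at hz
      obtain ⟨i, rfl⟩ := hz
      obtain ⟨a, ha, hfa⟩ := (f i).2
      have : s • ((f i : A)) = a := by rw [← hfa, smul_inv_smul₀ (ne_of_gt hs0)]
      simpa only [this] using hclose a ha
    have hlen : l₀.length = k + 1 := by simp [hl₀]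
    have hkey := key T₀ M r ε (le_of_lt hM0) (le_of_lt hr0) (le_of_lt hε0) H l₀ [] (by simp) hl₀close
    simp only [List.nil_append, List.length_nil, pow_zero, mul_one] at hkey
    rw [hlen, ← hs] at hkey
    rw [hxval, norm_smul, Real.norm_eq_abs]
    have habs : |(s⁻¹) ^ (k + 1)| = (s ^ (k + 1))⁻¹ := by
      rw [abs_of_pos (pow_pos (inv_pos.mpr hs0) _), inv_pow]
    rw [habs, inv_mul_le_iff₀ (pow_pos hs0 _)]
    exact hkey.trans_eq (mul_comm _ _)
  have hle : specRad Tn ≤ ENNReal.ofReal s :=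
    sInf_le ⟨s, hs0, rfl, hbound⟩
  exact lt_of_le_of_lt hle (ENNReal.ofReal_lt_one.mpr hs1)
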